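/- Let p and p' be open-minded Borel probability measures on the Cantor space ℕ → Bool such that p is NOT absolutely continuous with respect to p'. Then p assigns positive probability to the event that p and p' polarize, i.e., p({ω : sup over all Borel sets A of |p(A | Γ_{ω|n}) − p'(A | Γ_{ω|n})| tends to 1 as n → ∞}) > 0. -/

import Mathlib

open MeasureTheory ProbabilityTheory Filter

/-- The cylinder set of infinite binary sequences whose initial segment is `x`. -/
def cylinder (x : List Bool) : Set (ℕ → Bool) :=
  {ω | ∀ i : Fin x.length, ω i = x.get i}

/-- The initial segment of length `n` of an infinite binary sequence `ω`. -/
def seg (ω : ℕ → Bool) (n : ℕ) : List Bool :=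
  List.ofFn (fun i : Fin n => ω i)

open Topology

/-! Choose a Borel set `N` with `p' N = 0 < p N`. The conditional probabilities
`p(N | Γ_{ω|n})` are the martingale `E_p[1_N | ω|n]`, so by Lévy's upward theorem they tend to
`1_N ω` for `p`-almost every `ω`; on `N` they thus tend to `1`, while `p'(N | Γ_{ω|n}) = 0`.
Hence the total variation distance, which never exceeds `1`, is squeezed to `1` on `N`. -/

lemma seg_eq_seg_iff {ω ω' : ℕ → Bool} {n : ℕ} :
    seg ω' n = seg ω n ↔ ∀ i < n, ω' i = ω i := by
  simp [seg, List.ofFn_inj, funext_iff, Fin.forall_iff]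

lemma cylinder_seg (ω : ℕ → Bool) (n : ℕ) :
    cylinder (seg ω n) = {ω' | seg ω' n = seg ω n} := by
  ext ω'
  simp only [_root_.cylinder, Set.mem_ofPred_eq, seg_eq_seg_iff, List.get_eq_getElem]
  simp [seg, Fin.forall_iff]

lemma take_seg (ω : ℕ → Bool) {m n : ℕ} (h : m ≤ n) : (seg ω n).take m = seg ω m := by
  apply List.ext_getElem <;> simp [seg, h]

lemma getElem?_seg (ω : ℕ → Bool) {i n : ℕ} (h : i < n) : (seg ω n)[i]? = some (ω i) := by
  simp [seg, h]

section CountablePartition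

variable {Ω α : Type*} {f : Ω → α}

lemma measurable_comap_top_comp {β : Type*} [MeasurableSpace β] (g : α → β) :
    Measurable[MeasurableSpace.comap f ⊤] (fun ω => g (f ω)) :=
  fun s _ => ⟨g ⁻¹' s, trivial, rfl⟩

variable [MeasurableSpace Ω] [Countable α]

lemma comap_top_le_of_measurableSet_preimage_singleton
    (hf : ∀ a, MeasurableSet (f ⁻¹' {a})) :
    MeasurableSpace.comap f ⊤ ≤ ‹MeasurableSpace Ω› :=
  (@measurable_to_countable' α Ω ⊤ _ _ f hf).comap_le

theorem condExp_comap_ae_eq_cond {μ : Measure Ω} [IsFiniteMeasure μ]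
    (hf : ∀ a, MeasurableSet (f ⁻¹' {a})) {N : Set Ω} (hN : MeasurableSet N) :
    μ⟦N | MeasurableSpace.comap f ⊤⟧ =ᵐ[μ] fun ω => μ[|f ⁻¹' {f ω}].real N := by
  have hg_int : Integrable (fun ω => μ[|f ⁻¹' {f ω}].real N) μ :=
    .of_bound (C := 1) ((measurable_comap_top_comp fun a => μ[|f ⁻¹' {a}].real N).mono
      (comap_top_le_of_measurableSet_preimage_singleton hf) le_rfl).aestronglyMeasurable
      (ae_of_all _ fun ω => by
        rw [Real.norm_of_nonneg measureReal_nonneg]; exact measureReal_le_one)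
  refine (ae_eq_condExp_of_forall_setIntegral_eq
    (comap_top_le_of_measurableSet_preimage_singleton hf) ((integrable_const 1).indicator hN)
    (fun _ _ _ => hg_int.integrableOn) ?_ ?_).symm
  · rintro _ ⟨t, -, rfl⟩ -
    have hfib : f ⁻¹' t = ⋃ a : t, f ⁻¹' {(a : α)} := by ext; simp
    have hdisj : Pairwise (Function.onFun Disjoint fun a : t => f ⁻¹' {(a : α)}) :=
      fun a b hab => (Set.disjoint_singleton.mpr (Subtype.coe_injective.ne hab)).preimage f
    rw [hfib, integral_iUnion (fun _ => hf _) hdisj hg_int.integrableOn,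
      integral_iUnion (fun _ => hf _) hdisj ((integrable_const 1).indicator hN).integrableOn]
    refine tsum_congr fun a => ?_
    have hconst : ∀ ω ∈ f ⁻¹' {(a : α)},
        μ[|f ⁻¹' {f ω}].real N = μ[|f ⁻¹' {(a : α)}].real N :=
      fun ω hω => by rw [hω]
    rw [setIntegral_congr_fun (hf _) hconst, setIntegral_const, setIntegral_indicator hN,
      setIntegral_const, smul_eq_mul, smul_eq_mul, mul_one, measureReal_def, measureReal_def,
      measureReal_def, ← ENNReal.toReal_mul, mul_comm, cond_mul_eq_inter (hf _), Set.inter_comm]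
  · exact (measurable_comap_top_comp fun a => μ[|f ⁻¹' {a}].real N).aestronglyMeasurable

end CountablePartition

lemma measurable_seg_top (n : ℕ) : Measurable[_, ⊤] (seg · n) :=
  (@measurable_of_countable _ _ _ ⊤ _ _ List.ofFn).comp
    (measurable_pi_lambda _ fun i => measurable_pi_apply (i : ℕ))

def segFiltration : Filtration ℕ (inferInstance : MeasurableSpace (ℕ → Bool)) where
  seq n := MeasurableSpace.comap (seg · n) ⊤
  mono' m n hmn := by
    have h : (seg · m) = List.take m ∘ (seg · n) := funext fun ω => (take_seg ω hmn).symm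
    simp only [h, ← MeasurableSpace.comap_comp]
    exact MeasurableSpace.comap_mono le_top
  le' n := (measurable_seg_top n).comap_le

lemma iSup_segFiltration :
    ⨆ n, segFiltration n = (inferInstance : MeasurableSpace (ℕ → Bool)) := by
  refine le_antisymm (iSup_le segFiltration.le) (iSup_le fun i => ?_)
  have h : (fun ω : ℕ → Bool => ω i) = fun ω => ((seg ω (i + 1))[i]?).getD false := by
    simp [getElem?_seg]
  rw [h]
  exact ((measurable_comap_top_comp fun l : List Bool => l[i]?.getD false).mono
    (le_iSup (⇑segFiltration) (i + 1)) le_rfl).comap_le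

theorem ae_tendsto_measureReal_cond_cylinder_seg (p : Measure (ℕ → Bool)) [IsFiniteMeasure p]
    {N : Set (ℕ → Bool)} (hN : MeasurableSet N) :
    ∀ᵐ ω ∂p,
      Tendsto (fun n => p[|cylinder (seg ω n)].real N) atTop (𝓝 (N.indicator 1 ω)) := by
  have hmeas : StronglyMeasurable[⨆ n, segFiltration n] (N.indicator fun _ => (1 : ℝ)) := by
    rw [iSup_segFiltration]
    exact stronglyMeasurable_const.indicator hN
  have hcond n := condExp_comap_ae_eq_cond (μ := p) (f := (seg · n))
    (fun x => measurable_seg_top n (by trivial)) hN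
  filter_upwards [((integrable_const 1).indicator hN).tendsto_ae_condExp hmeas,
    ae_all_iff.mpr hcond] with ω hlim hω
  simp_rw [cylinder_seg]
  exact (funext hω : _) ▸ hlim

section TotalVariation

variable {Ω : Type*} [MeasurableSpace Ω]

noncomputable def tvDist (q q' : Measure Ω) : ℝ :=
  ⨆ (A : Set Ω) (_ : MeasurableSet A), |q.real A - q'.real A|

variable (q q' : Measure Ω) [IsZeroOrProbabilityMeasure q] [IsZeroOrProbabilityMeasure q']

lemma abs_measureReal_sub_le_one (A : Set Ω) : |q.real A - q'.real A| ≤ 1 :=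
  abs_sub_le_of_nonneg_of_le measureReal_nonneg measureReal_le_one measureReal_nonneg
    measureReal_le_one

lemma tvDist_le_one : tvDist q q' ≤ 1 :=
  Real.iSup_le (fun A => Real.iSup_le (fun _ => abs_measureReal_sub_le_one q q' A) zero_le_one)
    zero_le_one

lemma abs_measureReal_sub_le_tvDist {A : Set Ω} (hA : MeasurableSet A) :
    |q.real A - q'.real A| ≤ tvDist q q' := by
  have hbdd : BddAbove (Set.range fun A : Set Ω =>
      ⨆ (_ : MeasurableSet A), |q.real A - q'.real A|) :=
    ⟨1, Set.forall_mem_range.mpr fun A =>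
      Real.iSup_le (fun _ => abs_measureReal_sub_le_one q q' A) zero_le_one⟩
  exact le_ciSup_of_le hbdd A (by rw [ciSup_pos hA])

end TotalVariation

theorem polarization_of_opinions_general (p p' : Measure (ℕ → Bool))
    [IsProbabilityMeasure p]
    (hnac : ¬ p ≪ p') :
    0 < p {ω : ℕ → Bool | Tendsto
      (fun n : ℕ => ⨆ (A : Set (ℕ → Bool)) (_ : MeasurableSet A),
        |((p[|cylinder (seg ω n)]) A).toReal - ((p'[|cylinder (seg ω n)]) A).toReal|)
      atTop (nhds 1)} := by
  obtain ⟨N, hN, hp'N, hpN⟩ : ∃ N, MeasurableSet N ∧ p' N = 0 ∧ 0 < p N := by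
    by_contra! h
    exact hnac (.mk fun s hs hs0 => nonpos_iff_eq_zero.mp (h s hs hs0))
  refine hpN.trans_le (measure_mono_ae ?_)
  filter_upwards [ae_tendsto_measureReal_cond_cylinder_seg p hN] with ω hlim hωN
  rw [Set.indicator_of_mem hωN] at hlim
  refine tendsto_of_tendsto_of_tendsto_of_le_of_le hlim tendsto_const_nhds (fun n => ?_)
    (fun n => tvDist_le_one _ _)
  have hp'cond : p'[|cylinder (seg ω n)].real N = 0 :=
    (measureReal_eq_zero_iff).mpr (cond_absolutelyContinuous hp'N)
  calc p[|cylinder (seg ω n)].real N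
      = |p[|cylinder (seg ω n)].real N - p'[|cylinder (seg ω n)].real N| := by
        rw [hp'cond, sub_zero, abs_of_nonneg measureReal_nonneg]
    _ ≤ tvDist _ _ := abs_measureReal_sub_le_tvDist _ _ hN

/-- If `p` and `p'` are open-minded probability measures on Cantor space and `p` is NOT
absolutely continuous with respect to `p'`, then `p` assigns positive probability to the
event that `p` and `p'` polarize: the total variational distance between the conditional
measures given the first `n` bits tends to `1`. -/
theorem polarization_of_opinions (p p' : Measure (ℕ → Bool))
    [IsProbabilityMeasure p] [IsProbabilityMeasure p']
    (hp : ∀ x : List Bool, 0 < p (cylinder x))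
    (hp' : ∀ x : List Bool, 0 < p' (cylinder x))
    (hnac : ¬ p ≪ p') :
    0 < p {ω : ℕ → Bool | Tendsto
      (fun n : ℕ => ⨆ (A : Set (ℕ → Bool)) (_ : MeasurableSet A),
        |((p[|cylinder (seg ω n)]) A).toReal - ((p'[|cylinder (seg ω n)]) A).toReal|)
      atTop (nhds 1)} :=
  polarization_of_opinions_general p p' hnac
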